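/- Exponential sum identity: for Q a symmetric n×n matrix over GF(q) (q odd) of rank r, q^n ρ^{-r} Δ(Q) = Σ_{x ∈ GF(q)^n} [ (1+δ)/2 · ψ(Q(x)) + (1-δ)/2 · ψ(ν Q(x)) ], where Q(x) = xQx^T, δ = χ(-1), ν is a fixed nonsquare, ψ the canonical additive character, ρ the quadratic Gauss sum, and Δ(Q) the quadratic character of the determinant of the nonsingular part of Q. -/

import Mathlib

/-!
Diagonalize `Q = Mᵀ · diag(d) · M` with `M` invertible, so that `r = #{i | dᵢ ≠ 0}`.
Substituting `y = M x`, the sum `∑ₓ ψ(c Q(x))` factors into the one-variable sums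
`∑ₜ ψ(c dᵢ t²)`, which equal `q` when `dᵢ = 0` and `χ(c dᵢ) ρ` otherwise. Hence
`∑ₓ ψ(Q(x)) = q^(n-r) ρ^r Δ(Q)` and, since `χ(ν) = -1`, `∑ₓ ψ(ν Q(x)) = q^(n-r) (-ρ)^r Δ(Q)`.
The weights `(1 ± δ)/2` pick out `(δρ)^r`, and `ρ² = δq` turns `q^(n-r) (δρ)^r` into `q^n ρ^(-r)`.
-/

open Matrix
open scoped Classical

/-- The canonical additive character of the finite field `F` of characteristic `p`. -/
noncomputable def psi (p : ℕ) (F : Type) [Field F] [Fintype F] [Algebra (ZMod p) F] : F → ℂ :=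
  fun a => Complex.exp (2 * Real.pi * Complex.I * ((Algebra.trace (ZMod p) F a).val : ℂ) / p)

/-- `Δ(Q)`: the quadratic character of the product of the nonzero diagonal entries of a
diagonalization of the symmetric matrix `Q`, i.e. the quadratic character of the determinant
of the nonsingular part of `Q` (with `Δ(0) = 1`). -/
noncomputable def Delta (F : Type) [Field F] [Fintype F] [DecidableEq F] {n : ℕ}
    (Q : Matrix (Fin n) (Fin n) F) : ℤ :=
  if h : ∃ M : Matrix (Fin n) (Fin n) F, ∃ d : Fin n → F,
      IsUnit M ∧ Q = Mᵀ * Matrix.diagonal d * M then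
    quadraticChar F (∏ i ∈ Finset.univ.filter (fun i => h.choose_spec.choose i ≠ 0),
      h.choose_spec.choose i)
  else 1

open Finset

theorem FiniteField.ringChar_ne_two_of_odd_card {F : Type*} [Field F] [Fintype F]
    (h : Odd (Fintype.card F)) : ringChar F ≠ 2 := fun h2 =>
  Nat.not_even_iff_odd.2 h (Nat.even_iff.2 (FiniteField.even_card_iff_char_two.1 h2))

section CanonicalCharacter

variable (p : ℕ) [NeZero p] (F : Type) [Field F] [Fintype F] [Algebra (ZMod p) F]

noncomputable def psiAddChar : AddChar F ℂ :=
  ZMod.stdAddChar.compAddMonoidHom (Algebra.trace (ZMod p) F).toAddMonoidHom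

theorem psiAddChar_apply (a : F) : psiAddChar p F a = psi p F a := by
  rw [psiAddChar, AddChar.compAddMonoidHom_apply, ZMod.stdAddChar_apply, ZMod.toCircle_apply]
  rfl

variable {p F}

theorem isPrimitive_psiAddChar (hp : p = ringChar F) : (psiAddChar p F).IsPrimitive := by
  subst hp
  refine AddChar.IsPrimitive.of_ne_one (AddChar.ne_one_iff.2 ?_)
  obtain ⟨b, hb⟩ := FiniteField.trace_to_zmod_nondegenerate F (one_ne_zero (α := F))
  rw [one_mul] at hb
  exact ⟨b, fun h => hb (ZMod.injective_stdAddChar (h.trans (AddChar.map_zero_eq_one _).symm))⟩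

end CanonicalCharacter

section Diagonalization

variable {K : Type*} [Field K] {ι : Type*} [Fintype ι] [DecidableEq ι]

theorem Matrix.IsSymm.exists_isUnit_eq_transpose_mul_diagonal_mul (h2 : (2 : K) ≠ 0)
    {Q : Matrix ι ι K} (hQ : Q.IsSymm) :
    ∃ M : Matrix ι ι K, ∃ d : ι → K, IsUnit M ∧ Q = Mᵀ * diagonal d * M := by
  let _ : Invertible (2 : K) := invertibleOfNonzero h2
  have hB : LinearMap.IsSymm (toBilin' Q) := by
    refine ⟨fun x y => ?_⟩
    rw [RingHom.id_apply, toBilin'_apply', toBilin'_apply', dotProduct_mulVec,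
      ← mulVec_transpose, hQ.eq, dotProduct_comm]
  obtain ⟨v₀, hv₀⟩ := LinearMap.BilinForm.exists_orthogonal_basis hB
  let e : ι ≃ Fin _ := Fintype.equivFinOfCardEq (Module.finrank_fintype_fun_eq_card K).symm
  let v := v₀.reindex e.symm
  have hv : LinearMap.IsOrthoᵢ (toBilin' Q) v := fun i j hij => by
    simpa only [Function.onFun, v, Module.Basis.reindex_apply, Equiv.symm_symm]
      using hv₀ (e.injective.ne hij)
  set P := (Pi.basisFun K ι).toMatrix v
  let _ := (Pi.basisFun K ι).invertibleToMatrix v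
  have hdiag : Pᵀ * Q * P = diagonal fun i => toBilin' Q (v i) (v i) := by
    have h := LinearMap.BilinForm.toMatrix_mul_basis_toMatrix (Pi.basisFun K ι) v (toBilin' Q)
    rw [LinearMap.BilinForm.toMatrix_basisFun, LinearMap.BilinForm.toMatrix'_toBilin'] at h
    rw [h]
    ext i j
    rw [LinearMap.BilinForm.toMatrix_apply]
    rcases eq_or_ne i j with rfl | hij
    · rw [diagonal_apply_eq]
    · rw [diagonal_apply_ne _ hij, hv hij]
  refine ⟨P⁻¹, fun i => toBilin' Q (v i) (v i), isUnit_of_invertible _, ?_⟩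
  rw [← hdiag, transpose_nonsing_inv, Matrix.mul_assoc, Matrix.mul_assoc, mul_inv_of_invertible,
    Matrix.mul_one, ← Matrix.mul_assoc, inv_mul_of_invertible, Matrix.one_mul]

theorem Matrix.rank_transpose_mul_diagonal_mul [DecidableEq K] {M : Matrix ι ι K} (hM : IsUnit M)
    (d : ι → K) : (Mᵀ * diagonal d * M).rank = #{i | d i ≠ 0} := by
  have hdet : IsUnit M.det := (isUnit_iff_isUnit_det M).mp hM
  rw [rank_mul_eq_left_of_isUnit_det M _ hdet,
    rank_mul_eq_right_of_isUnit_det Mᵀ _ (by rwa [det_transpose]), rank_diagonal,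
    Fintype.card_subtype]

end Diagonalization

theorem Matrix.dotProduct_transpose_mul_diagonal_mul_mulVec {R ι : Type*} [CommSemiring R]
    [Fintype ι] [DecidableEq ι] (M : Matrix ι ι R) (d : ι → R) (x : ι → R) :
    x ⬝ᵥ (Mᵀ * diagonal d * M) *ᵥ x = ∑ i, d i * (M *ᵥ x) i ^ 2 := by
  rw [← mulVec_mulVec, ← mulVec_mulVec, dotProduct_mulVec, vecMul_transpose, dotProduct]
  exact sum_congr rfl fun i _ => by rw [mulVec_diagonal]; ring

theorem AddChar.map_sum_eq_prod {A M ι : Type*} [AddCommMonoid A] [CommMonoid M]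
    (ψ : AddChar A M) (s : Finset ι) (f : ι → A) : ψ (∑ i ∈ s, f i) = ∏ i ∈ s, ψ (f i) :=
  map_prod ψ.toMonoidHom (fun i => Multiplicative.ofAdd (f i)) s

theorem AddChar.sum_pi_map_sum_mul_sq {A M ι : Type*} [CommRing A] [Fintype A] [CommRing M]
    [Fintype ι] [DecidableEq ι] (ψ : AddChar A M) (w : ι → A) :
    ∑ y : ι → A, ψ (∑ i, w i * y i ^ 2) = ∏ i, ∑ t, ψ (w i * t ^ 2) := by
  rw [Fintype.prod_sum]
  exact sum_congr rfl fun y _ => ψ.map_sum_eq_prod _ _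

theorem AddChar.IsPrimitive.mulShift {F R : Type*} [Field F] [CommMonoid R] {ψ : AddChar F R}
    (hψ : ψ.IsPrimitive) {a : F} (ha : a ≠ 0) : (ψ.mulShift a).IsPrimitive := fun b hb => by
  rw [mulShift_mulShift]
  exact hψ (mul_ne_zero ha hb)

noncomputable abbrev quadraticCharIn (R F : Type*) [CommRing R] [Field F] [Fintype F]
    [DecidableEq F] : MulChar F R :=
  (quadraticChar F).ringHomComp (Int.castRingHom R)

theorem gaussSum_quadraticCharIn_mulShift_of_not_isSquare {F R : Type*} [Field F] [Fintype F]
    [DecidableEq F] [CommRing R] (ψ : AddChar F R) {ν : F} (hν : ¬IsSquare ν) :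
    gaussSum (quadraticCharIn R F) (ψ.mulShift ν) = -gaussSum (quadraticCharIn R F) ψ := by
  have hν0 : ν ≠ 0 := by rintro rfl; exact hν IsSquare.zero
  have hχν : quadraticCharIn R F ν = -1 := by
    simp [quadraticChar_neg_one_iff_not_isSquare.2 hν]
  simpa [((quadraticChar_isQuadratic F).comp _).inv, hχν] using
    gaussSum_mulShift_eq (quadraticCharIn R F) ψ (Units.mk0 ν hν0)

section GaussSum

variable {F : Type} {R : Type*} [Field F] [Fintype F] [DecidableEq F] [CommRing R] [IsDomain R]
  {ψ : AddChar F R}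

theorem sum_addChar_mul_sq (hF : ringChar F ≠ 2) (hψ : ψ.IsPrimitive) {a : F} (ha : a ≠ 0) :
    ∑ t : F, ψ (a * t ^ 2) = quadraticCharIn R F a * gaussSum (quadraticCharIn R F) ψ := by
  have hsqrts (u : F) : (#{t : F | t ^ 2 = u} : R) = quadraticCharIn R F u + 1 := by
    have h := congrArg (Int.cast : ℤ → R) (quadraticChar_card_sqrts hF u)
    rw [Set.toFinset_ofPred] at h
    push_cast at h
    exact h
  have hχ := (quadraticChar_isQuadratic F).comp (Int.castRingHom R)
  calc ∑ t : F, ψ (a * t ^ 2)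
      = ∑ u : F, (#{t : F | t ^ 2 = u} : R) * ψ (a * u) := by
        rw [← sum_fiberwise univ (fun t : F => t ^ 2) (fun t => ψ (a * t ^ 2))]
        refine sum_congr rfl fun u _ => ?_
        rw [sum_congr rfl fun t ht => by rw [(mem_filter.1 ht).2], sum_const, nsmul_eq_mul]
    _ = gaussSum (quadraticCharIn R F) (ψ.mulShift a) + ∑ u : F, ψ (u * a) := by
        simp only [hsqrts, add_mul, one_mul, sum_add_distrib, mul_comm _ a]
        rfl
    _ = quadraticCharIn R F a * gaussSum (quadraticCharIn R F) ψ := by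
        rw [AddChar.sum_mulShift a hψ, if_neg ha, Nat.cast_zero, add_zero,
          show a = (Units.mk0 a ha : F) from rfl, gaussSum_mulShift_eq, hχ.inv]

theorem sum_addChar_quadForm_transpose_mul_diagonal_mul (hF : ringChar F ≠ 2)
    (hψ : ψ.IsPrimitive) {ι : Type*} [Fintype ι] [DecidableEq ι]
    {M : Matrix ι ι F} (hM : IsUnit M) (d : ι → F) :
    ∑ x : ι → F, ψ (x ⬝ᵥ (Mᵀ * diagonal d * M) *ᵥ x) =
      (Fintype.card F : R) ^ (Fintype.card ι - #{i | d i ≠ 0}) *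
        gaussSum (quadraticCharIn R F) ψ ^ #{i | d i ≠ 0} *
        quadraticCharIn R F (∏ i ∈ univ.filter (fun i => d i ≠ 0), d i) := by
  have hbij : Function.Bijective M.mulVec :=
    Finite.injective_iff_bijective.1 (mulVec_injective_of_isUnit hM)
  have hzeros : #{i | d i = 0} = Fintype.card ι - #{i | d i ≠ 0} := by
    rw [← card_univ, ← card_filter_add_card_filter_not (s := univ) (fun i => d i = 0)]
    simp only [ne_eq, Nat.add_sub_cancel]
  calc ∑ x : ι → F, ψ (x ⬝ᵥ (Mᵀ * diagonal d * M) *ᵥ x)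
      = ∑ y : ι → F, ψ (∑ i, d i * y i ^ 2) :=
        Fintype.sum_bijective _ hbij _ _ fun x => by
          rw [dotProduct_transpose_mul_diagonal_mul_mulVec]
    _ = ∏ i, ∑ t, ψ (d i * t ^ 2) := ψ.sum_pi_map_sum_mul_sq d
    _ = ∏ i, if d i = 0 then (Fintype.card F : R)
          else quadraticCharIn R F (d i) * gaussSum (quadraticCharIn R F) ψ := by
        refine prod_congr rfl fun i _ => ?_
        split_ifs with h
        · simp [h]
        · exact sum_addChar_mul_sq hF hψ h
    _ = _ := by
        rw [prod_ite, prod_const, prod_mul_distrib, prod_const, map_prod, hzeros]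
        ring

theorem sum_addChar_quadForm_eq_delta (hF : ringChar F ≠ 2) (hψ : ψ.IsPrimitive) {n : ℕ}
    {Q : Matrix (Fin n) (Fin n) F} (hQ : Q.IsSymm) :
    ∑ x : Fin n → F, ψ (x ⬝ᵥ Q *ᵥ x) =
      (Fintype.card F : R) ^ (n - Q.rank) * gaussSum (quadraticCharIn R F) ψ ^ Q.rank *
        (Delta F Q : R) := by
  have hex := hQ.exists_isUnit_eq_transpose_mul_diagonal_mul (Ring.two_ne_zero hF)
  rw [Delta, dif_pos hex]
  obtain ⟨hM, hQd⟩ := hex.choose_spec.choose_spec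
  generalize hex.choose_spec.choose = d at hQd ⊢
  generalize hex.choose = M at hM hQd
  clear hex
  subst hQd
  rw [rank_transpose_mul_diagonal_mul hM, sum_addChar_quadForm_transpose_mul_diagonal_mul hF hψ hM,
    Fintype.card_fin]
  rfl

end GaussSum

theorem pow_mul_zpow_neg_eq_of_sq_eq {K : Type*} [Field K] (h2 : (2 : K) ≠ 0) {q ρ δ : K}
    (hδ : δ = 1 ∨ δ = -1) (hρ : ρ ^ 2 = δ * q) {k n : ℕ} (hkn : k ≤ n) :
    q ^ n * ρ ^ (-(k : ℤ)) =
      (1 + δ) / 2 * (q ^ (n - k) * ρ ^ k) + (1 - δ) / 2 * (q ^ (n - k) * (-ρ) ^ k) := by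
  have hqn : q ^ n = q ^ (n - k) * q ^ k := by rw [← pow_add, Nat.sub_add_cancel hkn]
  have hρk : ρ ^ k * ρ ^ k * (ρ ^ k)⁻¹ = ρ ^ k := mul_self_mul_inv _
  rw [_root_.zpow_neg, zpow_natCast, hqn]
  rcases hδ with rfl | rfl
  · have hqk : q ^ k = ρ ^ k * ρ ^ k := by rw [← mul_pow, ← sq, hρ, one_mul]
    rw [one_add_one_eq_two, div_self h2, sub_self, zero_div]
    linear_combination q ^ (n - k) * (ρ ^ k)⁻¹ * hqk + q ^ (n - k) * hρk
  · have hqk : q ^ k = (-ρ) ^ k * ρ ^ k := by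
      rw [← mul_pow, neg_mul, ← sq, hρ, neg_one_mul, neg_neg]
    rw [add_neg_cancel, zero_div, sub_neg_eq_add, one_add_one_eq_two, div_self h2]
    linear_combination q ^ (n - k) * (ρ ^ k)⁻¹ * hqk + q ^ (n - k) * (-1) ^ k * hρk

theorem exponential_sum_identity_general (q n r p : ℕ) (F : Type) [Field F]
    [Fintype F] [DecidableEq F] [Algebra (ZMod p) F] (hp : p = ringChar F)
    (hq : Fintype.card F = q) (hodd : Odd q) (ν : F) (hν : ¬ IsSquare ν)
    (Q : Matrix (Fin n) (Fin n) F) (hQ : Q.IsSymm) (hr : Q.rank = r) :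
    (q : ℂ) ^ n * (∑ α : F, psi p F (α ^ 2)) ^ (-(r : ℤ)) * (Delta F Q : ℂ) =
      ∑ x : Fin n → F,
        ((1 + (quadraticChar F (-1) : ℂ)) / 2 * psi p F (dotProduct x (Q.mulVec x)) +
         (1 - (quadraticChar F (-1) : ℂ)) / 2 *
            psi p F (ν * dotProduct x (Q.mulVec x))) := by
  subst hq hr
  have hF := FiniteField.ringChar_ne_two_of_odd_card hodd
  have : NeZero p := ⟨hp ▸ (CharP.char_is_prime F _).ne_zero⟩
  have hψ := isPrimitive_psiAddChar (F := F) hp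
  have hρ : ∑ α : F, psiAddChar p F (α ^ 2) =
      gaussSum (quadraticCharIn ℂ F) (psiAddChar p F) := by
    simpa using sum_addChar_mul_sq hF hψ one_ne_zero
  have hχ : quadraticCharIn ℂ F ≠ 1 :=
    (MulChar.ringHomComp_ne_one_iff Int.cast_injective).2 (quadraticChar_ne_one hF)
  have hρsq := gaussSum_sq hχ ((quadraticChar_isQuadratic F).comp _) hψ
  have hδ : (quadraticChar F (-1) : ℂ) = 1 ∨ (quadraticChar F (-1) : ℂ) = -1 := by
    rcases quadraticChar_dichotomy (neg_ne_zero.2 (one_ne_zero (α := F))) with h | h <;>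
      simp [h]
  have hν0 : ν ≠ 0 := by rintro rfl; exact hν IsSquare.zero
  simp_rw [← psiAddChar_apply p F, ← AddChar.mulShift_apply]
  rw [sum_add_distrib, ← mul_sum, ← mul_sum, hρ, sum_addChar_quadForm_eq_delta hF hψ hQ,
    sum_addChar_quadForm_eq_delta hF (hψ.mulShift hν0) hQ,
    gaussSum_quadraticCharIn_mulShift_of_not_isSquare _ hν]
  linear_combination (Delta F Q : ℂ) *
    pow_mul_zpow_neg_eq_of_sq_eq two_ne_zero hδ hρsq (rank_le_width Q)

/-- Exponential sum identity: for a symmetric `n × n` matrix `Q` over `GF(q)` (`q` odd) of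
rank `r`, with `δ = χ(-1)`, `ν` a fixed nonsquare, `ψ` the canonical additive character and
`ρ` the quadratic Gauss sum,
`q^n ρ^{-r} Δ(Q) = Σ_x [(1+δ)/2 · ψ(Q(x)) + (1-δ)/2 · ψ(ν Q(x))]`. -/
theorem exponential_sum_identity (q n r p : ℕ) [Fact p.Prime] (hn : 1 ≤ n) (F : Type) [Field F]
    [Fintype F] [DecidableEq F] [Algebra (ZMod p) F] (hp : p = ringChar F)
    (hq : Fintype.card F = q) (hodd : Odd q) (ν : F) (hν : ¬ IsSquare ν)
    (Q : Matrix (Fin n) (Fin n) F) (hQ : Q.IsSymm) (hr : Q.rank = r) :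
    (q : ℂ) ^ n * (∑ α : F, psi p F (α ^ 2)) ^ (-(r : ℤ)) * (Delta F Q : ℂ) =
      ∑ x : Fin n → F,
        ((1 + (quadraticChar F (-1) : ℂ)) / 2 * psi p F (dotProduct x (Q.mulVec x)) +
         (1 - (quadraticChar F (-1) : ℂ)) / 2 *
            psi p F (ν * dotProduct x (Q.mulVec x))) :=
  exponential_sum_identity_general q n r p F hp hq hodd ν hν Q hQ hr
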